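/- Let (X,U,T,c) and (X,U,S,ĉ) be two MDPs both satisfying Assumption B, and suppose T satisfies the minorization condition with probability measure ρ and constant ε > 0, and S satisfies it with probability measure τ and the same constant ε > 0. Then ‖J*_∞(c,T) − J*_∞(ĉ,S)‖_∞ ≤ ‖c−ĉ‖_∞ + d_{h*_{c,T}}(T,S). If in addition h*_{c,T} is Lipschitz continuous, then ‖J*_∞(c,T) − J*_∞(ĉ,S)‖_∞ ≤ ‖c−ĉ‖_∞ + ‖h*_{c,T}‖_Lip · d_{W1}(T,S). -/

import Mathlib

open MeasureTheory Filter Topology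
open scoped NNReal ENNReal

noncomputable section

namespace MDPRobust

variable {X : Type*} {U : Type*} [MeasurableSpace X] [MeasurableSpace U]

/-- A history-dependent, randomized policy: at time `t`, given the history
`((x_0,u_0),…,(x_{t-1},u_{t-1})), x_t`, a distribution over actions. -/
def Policy (X U : Type*) [MeasurableSpace X] [MeasurableSpace U] : Type _ :=
  (t : ℕ) → ((Fin t → X × U) × X) → Measure U

/-- Admissibility of a policy: measurability and each action distribution is a
probability measure. -/
def IsAdmissible (γ : Policy X U) : Prop :=
  (∀ t, Measurable (γ t)) ∧ ∀ t h, IsProbabilityMeasure (γ t h)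

/-- Law of the history `((x_0,u_0),…,(x_{t-1},u_{t-1})), x_t` for the controlled Markov
process with transition kernel `T`, policy `γ` and initial state `x`. -/
def histMeas (T : X → U → Measure X) (γ : Policy X U) (x : X) :
    (t : ℕ) → Measure ((Fin t → X × U) × X)
  | 0 => Measure.dirac (fun i => i.elim0, x)
  | (t + 1) =>
      Measure.bind (histMeas T γ x t) fun z =>
        Measure.bind (γ t z) fun u =>
          Measure.map (fun x' => (Fin.snoc z.1 (z.2, u), x')) (T z.2 u)

/-- Expected cost incurred at time `t`: `E^{T,γ}[c(X_t,U_t) | X_0 = x]`. -/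
def costAt (c : X → U → ℝ) (T : X → U → Measure X) (γ : Policy X U) (x : X) (t : ℕ) : ℝ :=
  ∫ z, ∫ u, c z.2 u ∂(γ t z) ∂(histMeas T γ x t)

/-- Discounted value of a policy: `J_β(c,T,γ)(x)`. -/
def Jdisc (β : ℝ) (c : X → U → ℝ) (T : X → U → Measure X) (γ : Policy X U) (x : X) : ℝ :=
  ∑' t : ℕ, β ^ t * costAt c T γ x t

/-- Optimal discounted value `J*_β(c,T)(x)`: infimum over admissible policies. -/
def JdiscOpt (β : ℝ) (c : X → U → ℝ) (T : X → U → Measure X) (x : X) : ℝ :=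
  sInf {r | ∃ γ : Policy X U, IsAdmissible γ ∧ r = Jdisc β c T γ x}

/-- Average cost of a policy: `J_∞(c,T,γ)(x)`. -/
def Javg (c : X → U → ℝ) (T : X → U → Measure X) (γ : Policy X U) (x : X) : ℝ :=
  Filter.limsup (fun n : ℕ => (∑ t ∈ Finset.range n, costAt c T γ x t) / n) atTop

/-- Optimal average cost `J*_∞(c,T)(x)`. -/
def JavgOpt (c : X → U → ℝ) (T : X → U → Measure X) (x : X) : ℝ :=
  sInf {r | ∃ γ : Policy X U, IsAdmissible γ ∧ r = Javg c T γ x}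

/-- The (Markov, randomized-as-Dirac) policy induced by a deterministic stationary
policy `g : X → U`. -/
def statPolicy (g : X → U) : Policy X U := fun _ z => Measure.dirac (g z.2)

/-- `|∫ f dμ − ∫ f dν|`. -/
def dFun (f : X → ℝ) (μ ν : Measure X) : ℝ := |∫ y, f y ∂μ - ∫ y, f y ∂ν|

section Topo

variable [MetricSpace X] [MetricSpace U]

/-- Assumption B (standing assumptions): `c` nonnegative, bounded, jointly continuous,
`T` a weakly continuous controlled probability kernel. (Compactness of `U` is carried
as an instance hypothesis.) -/
def AssumptionB (T : X → U → Measure X) (c : X → U → ℝ) : Prop :=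
  (∀ x u, 0 ≤ c x u) ∧ (∃ B : ℝ, ∀ x u, |c x u| ≤ B) ∧
  Continuous (Function.uncurry c) ∧
  (∀ x u, IsProbabilityMeasure (T x u)) ∧
  Measurable (Function.uncurry T) ∧
  (∀ v : X → ℝ, Continuous v → (∃ B : ℝ, ∀ y, |v y| ≤ B) →
    Continuous fun p : X × U => ∫ y, v y ∂(T p.1 p.2))

/-- `x ↦ c(x,u)` is `K`-Lipschitz for every `u`. -/
def CostLipschitz (c : X → U → ℝ) (K : ℝ≥0) : Prop :=
  ∀ u, LipschitzWith K fun x => c x u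

/-- `x ↦ T(·|x,u)` is `K`-Lipschitz into `(P(X), W₁)`, expressed through the
Kantorovich–Rubinstein dual form of the Wasserstein-1 distance. -/
def KernelLipschitz (T : X → U → Measure X) (K : ℝ≥0) : Prop :=
  ∀ f : X → ℝ, LipschitzWith 1 f → ∀ u x y,
    |∫ a, f a ∂(T x u) - ∫ a, f a ∂(T y u)| ≤ K * dist x y

/-- Assumption M (Wasserstein regular MDP for discount factor `β`). -/
def AssumptionM (β : ℝ) (T : X → U → Measure X) (c : X → U → ℝ)
    (Kc KT : ℝ≥0) : Prop :=
  AssumptionB T c ∧ CostLipschitz c Kc ∧ KernelLipschitz T KT ∧ β * KT < 1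

/-- Assumption E(c): joint Lipschitz continuity of the kernel in state and action,
in the dual (Kantorovich–Rubinstein) form of the Wasserstein-1 distance. -/
def AssumptionEc (T : X → U → Measure X) (Lt : ℝ≥0) : Prop :=
  ∀ f : X → ℝ, LipschitzWith 1 f → ∀ x y u u',
    |∫ a, f a ∂(T x u) - ∫ a, f a ∂(T y u')| ≤ Lt * (dist x y + dist u u')

/-- Assumption E(b): uniform Lipschitz bound on discounted value functions near `β = 1`. -/
def AssumptionEb (T : X → U → Measure X) (c : X → U → ℝ) (L : ℝ≥0) : Prop :=
  ∃ βstar : ℝ, 0 < βstar ∧ βstar < 1 ∧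
    ∀ β : ℝ, βstar ≤ β → β < 1 → LipschitzWith L (JdiscOpt β c T)

end Topo

/-- Minorization condition: `T(A|x,u) ≥ ε ρ(A)` for all `x`, `u`, Borel `A`. -/
def Minorized (T : X → U → Measure X) (ρ : Measure X) (ε : ℝ≥0) : Prop :=
  ∀ x u, ∀ A : Set X, MeasurableSet A → (ε : ℝ≥0∞) * ρ A ≤ T x u A

end MDPRobust

namespace MDPRobust

/-! ### Auxiliary measure-theoretic lemmas -/

section AuxMeasure

open Function

variable {α β : Type*} [MeasurableSpace α] [MeasurableSpace β]

lemma integrable_of_bound (μ : Measure α) [IsFiniteMeasure μ] {f : α → ℝ}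
    (hf : AEStronglyMeasurable f μ) (B : ℝ) (hB : ∀ a, |f a| ≤ B) : Integrable f μ :=
  ⟨hf, HasFiniteIntegral.of_bounded (C := B)
    (Filter.Eventually.of_forall (by simpa [Real.norm_eq_abs] using hB))⟩

lemma abs_integral_le (μ : Measure α) [IsProbabilityMeasure μ] {f : α → ℝ}
    (B : ℝ) (hB : ∀ a, |f a| ≤ B) : |∫ a, f a ∂μ| ≤ B := by
  have := norm_integral_le_of_norm_le_const (μ := μ) (f := f) (C := B)
    (Filter.Eventually.of_forall (by simpa [Real.norm_eq_abs] using hB))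
  simpa [Real.norm_eq_abs] using this

lemma isProbabilityMeasure_bind (μ : Measure α) [IsProbabilityMeasure μ]
    {κ : α → Measure β} (hκ : Measurable κ) (hκp : ∀ a, IsProbabilityMeasure (κ a)) :
    IsProbabilityMeasure (μ.bind κ) := by
  constructor
  rw [Measure.bind_apply MeasurableSet.univ hκ.aemeasurable]
  simp [fun a => (hκp a).measure_univ]

lemma measurable_integral_of_bound {κ : α → Measure β} (hκ : Measurable κ)
    (hκp : ∀ a, IsProbabilityMeasure (κ a)) {f : β → ℝ} (hf : Measurable f)
    (B : ℝ) (hB : ∀ y, |f y| ≤ B) :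
    Measurable fun a => ∫ y, f y ∂(κ a) := by
  set g : β → ℝ := fun y => f y + B with hg
  have hg0 : ∀ y, 0 ≤ g y := fun y => by
    have := (abs_le.1 (hB y)).1; simp [hg]; linarith
  have hgm : Measurable fun y => ENNReal.ofReal (g y) :=
    (hf.add measurable_const).ennreal_ofReal
  have key : ∀ a, ∫ y, f y ∂(κ a) = (∫⁻ y, ENNReal.ofReal (g y) ∂(κ a)).toReal - B := by
    intro a
    have h1 : ∫ y, g y ∂(κ a) = (∫⁻ y, ENNReal.ofReal (g y) ∂(κ a)).toReal :=
      integral_eq_lintegral_of_nonneg_ae (Filter.Eventually.of_forall hg0)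
        (hf.add measurable_const).aestronglyMeasurable
    have hfint : Integrable f (κ a) :=
      integrable_of_bound _ hf.aestronglyMeasurable B hB
    have h2 : ∫ y, g y ∂(κ a) = (∫ y, f y ∂(κ a)) + B := by
      rw [hg]
      rw [integral_add hfint (integrable_const B)]
      simp [(hκp a).measure_univ]
    rw [← h1, h2]; ring
  simp only [key]
  exact ((Measure.measurable_lintegral hgm).comp hκ).ennreal_toReal.sub measurable_const

lemma integral_bind_of_bound (μ : Measure α) [IsProbabilityMeasure μ]
    {κ : α → Measure β} (hκ : Measurable κ) (hκp : ∀ a, IsProbabilityMeasure (κ a))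
    {f : β → ℝ} (hf : Measurable f) (B : ℝ) (hB : ∀ y, |f y| ≤ B) :
    ∫ y, f y ∂(μ.bind κ) = ∫ a, ∫ y, f y ∂(κ a) ∂μ := by
  have hbp : IsProbabilityMeasure (μ.bind κ) := isProbabilityMeasure_bind μ hκ hκp
  set g : β → ℝ := fun y => f y + B with hg
  have hg0 : ∀ y, 0 ≤ g y := fun y => by
    have := (abs_le.1 (hB y)).1; simp [hg]; linarith
  have hgB : ∀ y, |g y| ≤ 2 * B := fun y => by
    have h := abs_le.1 (hB y); rw [abs_le]
    constructor <;> simp [hg] <;> linarith [h.1, h.2]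
  have hgm : Measurable fun y => ENNReal.ofReal (g y) :=
    (hf.add measurable_const).ennreal_ofReal
  have hint : ∀ (ν : Measure β), IsProbabilityMeasure ν →
      ∫ y, g y ∂ν = (∫⁻ y, ENNReal.ofReal (g y) ∂ν).toReal := by
    intro ν hν
    exact integral_eq_lintegral_of_nonneg_ae (Filter.Eventually.of_forall hg0)
      (hf.add measurable_const).aestronglyMeasurable
  have hsplit : ∀ (ν : Measure β), IsProbabilityMeasure ν →
      ∫ y, g y ∂ν = (∫ y, f y ∂ν) + B := by
    intro ν hν
    rw [hg]
    rw [integral_add (integrable_of_bound _ hf.aestronglyMeasurable B hB) (integrable_const B)]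
    simp [hν.measure_univ]
  have hlin : ∫⁻ y, ENNReal.ofReal (g y) ∂(μ.bind κ)
      = ∫⁻ a, ∫⁻ y, ENNReal.ofReal (g y) ∂(κ a) ∂μ :=
    Measure.lintegral_bind hκ.aemeasurable hgm.aemeasurable
  have hfin : ∀ a, ∫⁻ y, ENNReal.ofReal (g y) ∂(κ a) ≤ ENNReal.ofReal (2 * B) := by
    intro a
    calc ∫⁻ y, ENNReal.ofReal (g y) ∂(κ a) ≤ ∫⁻ _, ENNReal.ofReal (2 * B) ∂(κ a) := by
          apply lintegral_mono; intro y
          exact ENNReal.ofReal_le_ofReal (le_trans (le_abs_self _) (hgB y))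
      _ = ENNReal.ofReal (2 * B) := by simp [(hκp a).measure_univ]
  have hmeaslin : Measurable fun a => ∫⁻ y, ENNReal.ofReal (g y) ∂(κ a) :=
    (Measure.measurable_lintegral hgm).comp hκ
  have houter : ∫ a, (∫⁻ y, ENNReal.ofReal (g y) ∂(κ a)).toReal ∂μ
      = (∫⁻ a, ∫⁻ y, ENNReal.ofReal (g y) ∂(κ a) ∂μ).toReal := by
    rw [integral_toReal hmeaslin.aemeasurable]
    exact Filter.Eventually.of_forall fun a =>
      lt_of_le_of_lt (hfin a) ENNReal.ofReal_lt_top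
  have hbind : ∫ y, g y ∂(μ.bind κ) = ∫ a, ∫ y, g y ∂(κ a) ∂μ := by
    rw [hint _ hbp, hlin, ← houter]
    congr 1
    ext a
    rw [hint _ (hκp a)]
  have hintf : Integrable (fun a => ∫ y, f y ∂(κ a)) μ :=
    integrable_of_bound _ (measurable_integral_of_bound hκ hκp hf B hB).aestronglyMeasurable
      B (fun a => abs_integral_le (κ a) B hB)
  have := hsplit _ hbp
  rw [this] at hbind
  have hR : ∫ a, ∫ y, g y ∂(κ a) ∂μ = (∫ a, ∫ y, f y ∂(κ a) ∂μ) + B := by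
    have heq : (fun a => ∫ y, g y ∂(κ a)) = fun a => (∫ y, f y ∂(κ a)) + B := by
      ext a; exact hsplit _ (hκp a)
    rw [heq, integral_add hintf (integrable_const B)]
    simp
  rw [hR] at hbind
  linarith

lemma measurable_snoc {W : Type*} [MeasurableSpace W] {t : ℕ} :
    Measurable fun p : (Fin t → W) × W => (Fin.snoc p.1 p.2 : Fin (t+1) → W) := by
  refine measurable_pi_lambda _ fun i => ?_
  refine Fin.lastCases ?_ ?_ i
  · simpa [Fin.snoc_last] using measurable_snd
  · intro j
    simp only [Fin.snoc_castSucc]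
    exact (measurable_pi_apply j).comp measurable_fst

end AuxMeasure

/-! ### Core lemmas about `histMeas`, `costAt`, `Javg` -/

section Core

open Function ProbabilityTheory

variable {X U : Type*} [MeasurableSpace X] [MeasurableSpace U]

/-- One-step transition kernel on histories. -/
def stepKer (Q : X → U → Measure X) (γ : Policy X U) (t : ℕ) :
    ((Fin t → X × U) × X) → Measure ((Fin (t+1) → X × U) × X) :=
  fun z => Measure.bind (γ t z) fun u =>
    Measure.map (fun x' => (Fin.snoc z.1 (z.2, u), x')) (Q z.2 u)

variable {Q : X → U → Measure X} (hQm : Measurable (Function.uncurry Q))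
  (hQp : ∀ x u, IsProbabilityMeasure (Q x u))
  {γ : Policy X U} (hγ : IsAdmissible γ)

lemma histMeas_succ (x : X) (t : ℕ) :
    histMeas Q γ x (t+1) = (histMeas Q γ x t).bind (stepKer Q γ t) := rfl

lemma histMeas_zero (x : X) :
    histMeas Q γ x 0 = Measure.dirac ((fun i => i.elim0), x) := rfl

include hQm hQp hγ

omit hγ in
lemma measurable_innerKer (t : ℕ) :
    Measurable fun p : (((Fin t → X × U) × X) × U) =>
      Measure.map (fun x' : X => ((Fin.snoc p.1.1 (p.1.2, p.2) : Fin (t+1) → X × U), x'))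
        (Q p.1.2 p.2) := by
  apply Measure.measurable_of_measurable_coe
  intro s hs
  have hφ : ∀ p : (((Fin t → X × U) × X) × U),
      Measurable fun x' : X => ((Fin.snoc p.1.1 (p.1.2, p.2) : Fin (t+1) → X × U), x') :=
    fun p => measurable_const.prodMk measurable_id
  simp only [Measure.map_apply (hφ _) hs]
  set Φ : ((((Fin t → X × U) × X) × U) × X) → ((Fin (t+1) → X × U) × X) :=
    fun q => (Fin.snoc q.1.1.1 (q.1.1.2, q.1.2), q.2) with hΦ
  have hΦm : Measurable Φ :=
    (measurable_snoc.comp ((measurable_fst.fst.fst).prodMk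
      ((measurable_fst.fst.snd).prodMk measurable_fst.snd))).prodMk measurable_snd
  have hset : MeasurableSet (Φ ⁻¹' s) := hΦm hs
  let QK : Kernel (X × U) X := ⟨Function.uncurry Q, hQm⟩
  haveI : IsMarkovKernel QK := ⟨fun p => hQp p.1 p.2⟩
  let κ' : Kernel ((((Fin t → X × U) × X) × U)) X :=
    QK.comap (fun p => (p.1.2, p.2)) ((measurable_fst.snd).prodMk measurable_snd)
  haveI : IsMarkovKernel κ' := by
    constructor; intro a; exact hQp _ _
  exact ProbabilityTheory.Kernel.measurable_kernel_prodMk_left (κ := κ') hset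

lemma measurable_stepKer (t : ℕ) : Measurable (stepKer Q γ t) := by
  apply Measure.measurable_of_measurable_coe
  intro s hs
  have hin := measurable_innerKer hQm hQp (t := t)
  have hb : ∀ z, (stepKer Q γ t z) s
      = ∫⁻ u, (Measure.map (fun x' : X =>
          ((Fin.snoc z.1 (z.2, u) : Fin (t+1) → X × U), x')) (Q z.2 u)) s ∂(γ t z) :=
    fun z => Measure.bind_apply hs (hin.comp measurable_prodMk_left).aemeasurable
  simp only [hb]
  let κγ : Kernel ((Fin t → X × U) × X) U := ⟨γ t, hγ.1 t⟩
  haveI : IsMarkovKernel κγ := ⟨hγ.2 t⟩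
  exact Measurable.lintegral_kernel_prod_right' (κ := κγ)
    ((Measure.measurable_coe hs).comp hin)

lemma isProbabilityMeasure_stepKer (t : ℕ) (z : (Fin t → X × U) × X) :
    IsProbabilityMeasure (stepKer Q γ t z) := by
  haveI := hγ.2 t z
  refine isProbabilityMeasure_bind _
    ((measurable_innerKer hQm hQp (t := t)).comp measurable_prodMk_left) (fun u => ?_)
  haveI := hQp z.2 u
  exact Measure.isProbabilityMeasure_map (measurable_const.prodMk measurable_id).aemeasurable

lemma isProbabilityMeasure_histMeas (x : X) (t : ℕ) :
    IsProbabilityMeasure (histMeas Q γ x t) := by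
  induction t with
  | zero => rw [histMeas_zero]; infer_instance
  | succ t ih =>
    rw [histMeas_succ]
    exact isProbabilityMeasure_bind _ (measurable_stepKer hQm hQp hγ t)
      (isProbabilityMeasure_stepKer hQm hQp hγ t)

lemma integral_snd_histMeas_succ {h : X → ℝ} (hh : Measurable h) (B : ℝ)
    (hB : ∀ y, |h y| ≤ B) (x : X) (t : ℕ) :
    ∫ z, h z.2 ∂(histMeas Q γ x (t+1))
      = ∫ z, ∫ u, ∫ y, h y ∂(Q z.2 u) ∂(γ t z) ∂(histMeas Q γ x t) := by
  haveI := isProbabilityMeasure_histMeas hQm hQp hγ x t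
  rw [histMeas_succ,
    integral_bind_of_bound _ (measurable_stepKer hQm hQp hγ t)
      (isProbabilityMeasure_stepKer hQm hQp hγ t)
      (f := fun z : (Fin (t+1) → X × U) × X => h z.2) (hh.comp measurable_snd) B
      (fun z => hB z.2)]
  refine integral_congr_ae (Filter.Eventually.of_forall fun z => ?_)
  haveI := hγ.2 t z
  have hin := measurable_innerKer hQm hQp (t := t)
  show ∫ w : (Fin (t+1) → X × U) × X, h w.2 ∂(stepKer Q γ t z) = _
  rw [show stepKer Q γ t z = Measure.bind (γ t z) (fun u =>
      Measure.map (fun x' => (Fin.snoc z.1 (z.2, u), x')) (Q z.2 u)) from rfl,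
    integral_bind_of_bound _
      (κ := fun u => Measure.map (fun x' => ((Fin.snoc z.1 (z.2, u) : Fin (t+1) → X × U), x'))
        (Q z.2 u)) (hin.comp measurable_prodMk_left)
      (fun u => by
        haveI := hQp z.2 u
        exact Measure.isProbabilityMeasure_map (measurable_const.prodMk measurable_id).aemeasurable)
      (f := fun w : (Fin (t+1) → X × U) × X => h w.2) (hh.comp measurable_snd) B
      (fun w => hB w.2)]
  refine integral_congr_ae (Filter.Eventually.of_forall fun u => ?_)
  have hφu : Measurable fun x' : X => ((Fin.snoc z.1 (z.2, u) : Fin (t+1) → X × U), x') :=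
    measurable_const.prodMk measurable_id
  show (∫ w : (Fin (t+1) → X × U) × X, h w.2
      ∂Measure.map (fun x' => ((Fin.snoc z.1 (z.2, u) : Fin (t+1) → X × U), x')) (Q z.2 u))
    = ∫ y, h y ∂Q z.2 u
  rw [integral_map (f := fun w : (Fin (t+1) → X × U) × X => h w.2) hφu.aemeasurable
    (hh.comp measurable_snd).aestronglyMeasurable]

omit hQm hQp in
lemma stronglyMeasurable_integral_policy {t : ℕ} {f : ((Fin t → X × U) × X) → U → ℝ}
    (hf : Measurable (Function.uncurry f)) :
    StronglyMeasurable fun z => ∫ u, f z u ∂(γ t z) := by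
  let κγ : Kernel ((Fin t → X × U) × X) U := ⟨γ t, hγ.1 t⟩
  haveI : IsMarkovKernel κγ := ⟨hγ.2 t⟩
  exact MeasureTheory.StronglyMeasurable.integral_kernel_prod_right' (κ := κγ)
    hf.stronglyMeasurable

omit hγ in
lemma measurable_kernel_integral {h : X → ℝ} (hh : Measurable h) (B : ℝ)
    (hB : ∀ y, |h y| ≤ B) :
    Measurable fun p : X × U => ∫ y, h y ∂(Q p.1 p.2) :=
  measurable_integral_of_bound (κ := Function.uncurry Q) hQm (fun p => hQp p.1 p.2) hh B hB

lemma costAt_add_integral_next {d : X → U → ℝ} (hd : Measurable (Function.uncurry d))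
    (Bd : ℝ) (hBd : ∀ x u, |d x u| ≤ Bd) {h : X → ℝ} (hh : Measurable h) (B : ℝ)
    (hB : ∀ y, |h y| ≤ B) (x : X) (t : ℕ) :
    costAt d Q γ x t + ∫ z, h z.2 ∂(histMeas Q γ x (t+1))
      = ∫ z, ∫ u, (d z.2 u + ∫ y, h y ∂(Q z.2 u)) ∂(γ t z) ∂(histMeas Q γ x t) := by
  haveI := isProbabilityMeasure_histMeas hQm hQp hγ x t
  rw [integral_snd_histMeas_succ hQm hQp hγ hh B hB x t]
  have hd2 : Measurable fun p : ((Fin t → X × U) × X) × U => d p.1.2 p.2 :=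
    hd.comp (measurable_fst.snd.prodMk measurable_snd)
  have hQh2 : Measurable fun p : ((Fin t → X × U) × X) × U => ∫ y, h y ∂(Q p.1.2 p.2) :=
    (measurable_kernel_integral hQm hQp hh B hB).comp
      (measurable_fst.snd.prodMk measurable_snd)
  have hsm1 : StronglyMeasurable fun z : (Fin t → X × U) × X => ∫ u, d z.2 u ∂(γ t z) :=
    stronglyMeasurable_integral_policy hγ (f := fun z u => d z.2 u) hd2
  have hsm2 : StronglyMeasurable fun z : (Fin t → X × U) × X =>
      ∫ u, (∫ y, h y ∂(Q z.2 u)) ∂(γ t z) :=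
    stronglyMeasurable_integral_policy hγ (f := fun z u => ∫ y, h y ∂(Q z.2 u)) hQh2
  have hint1 : Integrable (fun z : (Fin t → X × U) × X => ∫ u, d z.2 u ∂(γ t z))
      (histMeas Q γ x t) :=
    integrable_of_bound _ hsm1.aestronglyMeasurable Bd (fun z => by
      haveI := hγ.2 t z; exact abs_integral_le _ Bd (fun u => hBd z.2 u))
  have hint2 : Integrable (fun z : (Fin t → X × U) × X =>
      ∫ u, (∫ y, h y ∂(Q z.2 u)) ∂(γ t z)) (histMeas Q γ x t) :=
    integrable_of_bound _ hsm2.aestronglyMeasurable B (fun z => by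
      haveI := hγ.2 t z
      exact abs_integral_le _ B (fun u => by
        haveI := hQp z.2 u; exact abs_integral_le _ B hB))
  have hc : costAt d Q γ x t
      = ∫ z, ∫ u, d z.2 u ∂(γ t z) ∂(histMeas Q γ x t) := rfl
  rw [hc, ← integral_add hint1 hint2]
  refine integral_congr_ae (Filter.Eventually.of_forall fun z => ?_)
  haveI := hγ.2 t z
  have hintu1 : Integrable (fun u => d z.2 u) (γ t z) :=
    integrable_of_bound _ (hd2.comp measurable_prodMk_left).aestronglyMeasurable Bd
      (fun u => hBd z.2 u)
  have hintu2 : Integrable (fun u => ∫ y, h y ∂(Q z.2 u)) (γ t z) :=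
    integrable_of_bound _ (hQh2.comp measurable_prodMk_left).aestronglyMeasurable B
      (fun u => by haveI := hQp z.2 u; exact abs_integral_le _ B hB)
  exact (integral_add hintu1 hintu2).symm

lemma abs_costAt_le {d : X → U → ℝ} (Bd : ℝ) (hBd : ∀ x u, |d x u| ≤ Bd)
    (x : X) (t : ℕ) : |costAt d Q γ x t| ≤ Bd := by
  haveI := isProbabilityMeasure_histMeas hQm hQp hγ x t
  exact abs_integral_le _ Bd (fun z => by
    haveI := hγ.2 t z
    exact abs_integral_le _ Bd (fun u => hBd z.2 u))

lemma integral_snd_histMeas_zero {h : X → ℝ} (hh : Measurable h) (x : X) :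
    ∫ z, h z.2 ∂(histMeas Q γ x 0) = h x := by
  rw [histMeas_zero]
  rw [integral_dirac' (fun z : (Fin 0 → X × U) × X => h z.2) _
    (hh.comp measurable_snd).stronglyMeasurable]

lemma step_ge {d : X → U → ℝ} (hd : Measurable (Function.uncurry d))
    (Bd : ℝ) (hBd : ∀ x u, |d x u| ≤ Bd) {h : X → ℝ} (hh : Measurable h) (B : ℝ)
    (hB : ∀ y, |h y| ≤ B) (r : ℝ)
    (hineq : ∀ x u, r + h x ≤ d x u + ∫ y, h y ∂(Q x u)) (x : X) (t : ℕ) :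
    r + ∫ z, h z.2 ∂(histMeas Q γ x t)
      ≤ costAt d Q γ x t + ∫ z, h z.2 ∂(histMeas Q γ x (t+1)) := by
  haveI := isProbabilityMeasure_histMeas hQm hQp hγ x t
  rw [costAt_add_integral_next hQm hQp hγ hd Bd hBd hh B hB x t]
  have hd2 : Measurable fun p : ((Fin t → X × U) × X) × U => d p.1.2 p.2 :=
    hd.comp (measurable_fst.snd.prodMk measurable_snd)
  have hQh2 : Measurable fun p : ((Fin t → X × U) × X) × U => ∫ y, h y ∂(Q p.1.2 p.2) :=
    (measurable_kernel_integral hQm hQp hh B hB).comp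
      (measurable_fst.snd.prodMk measurable_snd)
  have hintz : Integrable (fun z : (Fin t → X × U) × X => h z.2) (histMeas Q γ x t) :=
    integrable_of_bound _ (hh.comp measurable_snd).aestronglyMeasurable B (fun z => hB z.2)
  have h1 : r + ∫ z, h z.2 ∂(histMeas Q γ x t)
      = ∫ z, (r + h z.2) ∂(histMeas Q γ x t) := by
    rw [integral_add (integrable_const r) hintz]; simp
  rw [h1]
  refine integral_mono (by
      exact (integrable_const r).add hintz) ?_ ?_
  · refine integrable_of_bound _
      (stronglyMeasurable_integral_policy hγ
        (f := fun z u => d z.2 u + ∫ y, h y ∂(Q z.2 u)) (hd2.add hQh2)).aestronglyMeasurable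
      (Bd + B) (fun z => by
        haveI := hγ.2 t z
        exact abs_integral_le _ (Bd + B) (fun u => by
          haveI := hQp z.2 u
          exact (abs_add_le _ _).trans (add_le_add (hBd z.2 u) (abs_integral_le _ B hB))))
  · intro z
    haveI := hγ.2 t z
    show r + h z.2 ≤ ∫ u, (d z.2 u + ∫ y, h y ∂(Q z.2 u)) ∂(γ t z)
    have hcz : r + h z.2 = ∫ _u : U, (r + h z.2) ∂(γ t z) := by simp
    rw [hcz]
    refine integral_mono (integrable_const _) ?_ (fun u => hineq z.2 u)
    exact integrable_of_bound _ ((hd2.add hQh2).comp measurable_prodMk_left).aestronglyMeasurable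
      (Bd + B) (fun u => by
        haveI := hQp z.2 u
        exact (abs_add_le _ _).trans (add_le_add (hBd z.2 u) (abs_integral_le _ B hB)))

lemma sum_costAt_ge {d : X → U → ℝ} (hd : Measurable (Function.uncurry d))
    (Bd : ℝ) (hBd : ∀ x u, |d x u| ≤ Bd) {h : X → ℝ} (hh : Measurable h) (B : ℝ)
    (hB : ∀ y, |h y| ≤ B) (r : ℝ)
    (hineq : ∀ x u, r + h x ≤ d x u + ∫ y, h y ∂(Q x u)) (x : X) :
    ∀ n : ℕ, r * n + h x
      ≤ (∑ t ∈ Finset.range n, costAt d Q γ x t) + ∫ z, h z.2 ∂(histMeas Q γ x n) := by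
  intro n
  induction n with
  | zero => simp [integral_snd_histMeas_zero hQm hQp hγ hh x]
  | succ n ih =>
    have hstep := step_ge hQm hQp hγ hd Bd hBd hh B hB r hineq x n
    rw [Finset.sum_range_succ]
    push_cast
    linarith

lemma costAt_nonneg {d : X → U → ℝ} (hd0 : ∀ x u, 0 ≤ d x u) (x : X) (t : ℕ) :
    0 ≤ costAt d Q γ x t :=
  integral_nonneg fun z => integral_nonneg fun u => hd0 _ _

omit hQm hQp hγ in
lemma Javg_def (d : X → U → ℝ) (x : X) :
    Javg d Q γ x = Filter.limsup
      (fun n : ℕ => (∑ t ∈ Finset.range n, costAt d Q γ x t) / n) atTop := rfl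

lemma Javg_ge [Nonempty U] {d : X → U → ℝ} (hd : Measurable (Function.uncurry d))
    (Bd : ℝ) (hBd : ∀ x u, |d x u| ≤ Bd) {h : X → ℝ} (hh : Measurable h) (B : ℝ)
    (hB : ∀ y, |h y| ≤ B) (r : ℝ)
    (hineq : ∀ x u, r + h x ≤ d x u + ∫ y, h y ∂(Q x u)) (x : X) :
    r ≤ Javg d Q γ x := by
  have hB0 : 0 ≤ B := le_trans (abs_nonneg _) (hB x)
  have hBd0 : 0 ≤ Bd := le_trans (abs_nonneg _) (hBd x (Classical.arbitrary U))
  set a : ℕ → ℝ := fun n => (∑ t ∈ Finset.range n, costAt d Q γ x t) / n with ha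
  have hSn : ∀ n : ℕ, r * n - 2 * B ≤ ∑ t ∈ Finset.range n, costAt d Q γ x t := by
    intro n
    have h1 := sum_costAt_ge hQm hQp hγ hd Bd hBd hh B hB r hineq x n
    have h2 : |h x| ≤ B := hB x
    haveI := isProbabilityMeasure_histMeas hQm hQp hγ x n
    have h3 : |∫ z, h z.2 ∂(histMeas Q γ x n)| ≤ B :=
      abs_integral_le _ B (fun z => hB z.2)
    have := abs_le.1 h2
    have := abs_le.1 h3
    linarith
  have hab : ∀ᶠ n : ℕ in atTop, r - 2 * B / n ≤ a n := by
    filter_upwards [Filter.eventually_ge_atTop 1] with n hn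
    have hn0 : (0:ℝ) < n := by positivity
    rw [ha]
    rw [le_div_iff₀ hn0]
    have : (r - 2 * B / n) * n = r * n - 2 * B := by field_simp
    rw [this]
    exact hSn n
  have hbound : ∀ᶠ n : ℕ in atTop, a n ≤ Bd := by
    filter_upwards [Filter.eventually_ge_atTop 1] with n hn
    have hn0 : (0:ℝ) < n := by positivity
    rw [ha, div_le_iff₀ hn0]
    calc ∑ t ∈ Finset.range n, costAt d Q γ x t
        ≤ ∑ _t ∈ Finset.range n, Bd := by
          refine Finset.sum_le_sum fun t _ => ?_
          exact le_trans (le_abs_self _) (abs_costAt_le hQm hQp hγ Bd hBd x t)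
      _ = n * Bd := by simp [mul_comm]
      _ = Bd * n := by ring
  have htend : Tendsto (fun n : ℕ => r - 2 * B / (n:ℝ)) atTop (𝓝 r) := by
    have h0 : Tendsto (fun n : ℕ => 2 * B / (n:ℝ)) atTop (𝓝 0) :=
      Tendsto.div_atTop tendsto_const_nhds tendsto_natCast_atTop_atTop
    simpa using tendsto_const_nhds.sub h0
  have hlimb : Filter.limsup (fun n : ℕ => r - 2 * B / (n:ℝ)) atTop = r :=
    htend.limsup_eq
  rw [Javg_def, ← ha, ← hlimb]
  refine Filter.limsup_le_limsup hab ?_ ?_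
  · refine isCoboundedUnder_le_of_eventually_le atTop (x := r - 2 * B) ?_
    filter_upwards [Filter.eventually_ge_atTop 1] with n hn
    have hn0 : (0:ℝ) < n := by positivity
    have hn1 : (1:ℝ) ≤ n := by exact_mod_cast hn
    have : 2 * B / (n:ℝ) ≤ 2 * B := by
      rw [div_le_iff₀ hn0]
      nlinarith
    linarith
  · exact ⟨Bd, Filter.eventually_map.2 hbound⟩

end Core

section StatCore

open Function ProbabilityTheory

variable {X U : Type*} [MeasurableSpace X] [MeasurableSpace U]
variable {Q : X → U → Measure X} (hQm : Measurable (Function.uncurry Q))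
  (hQp : ∀ x u, IsProbabilityMeasure (Q x u))

lemma isAdmissible_statPolicy {sel : X → U} (hsel : Measurable sel) :
    IsAdmissible (statPolicy (X := X) (U := U) sel) := by
  constructor
  · exact fun t => Measure.measurable_dirac.comp (hsel.comp measurable_snd)
  · intro t z
    show IsProbabilityMeasure (Measure.dirac (sel z.2))
    infer_instance

include hQm hQp

lemma step_le_stat {d : X → U → ℝ} (hd : Measurable (Function.uncurry d))
    (Bd : ℝ) (hBd : ∀ x u, |d x u| ≤ Bd) {h : X → ℝ} (hh : Measurable h) (B : ℝ)
    (hB : ∀ y, |h y| ≤ B) (r : ℝ) {sel : X → U} (hsel : Measurable sel)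
    (hineq : ∀ x, d x (sel x) + ∫ y, h y ∂(Q x (sel x)) ≤ r + h x) (x : X) (t : ℕ) :
    costAt d Q (statPolicy sel) x t + ∫ z, h z.2 ∂(histMeas Q (statPolicy sel) x (t+1))
      ≤ r + ∫ z, h z.2 ∂(histMeas Q (statPolicy sel) x t) := by
  have hγ := isAdmissible_statPolicy (X := X) hsel
  haveI := isProbabilityMeasure_histMeas hQm hQp hγ x t
  rw [costAt_add_integral_next hQm hQp hγ hd Bd hBd hh B hB x t]
  have hd2 : Measurable fun p : X × U => d p.1 p.2 := hd
  have hQh : Measurable fun p : X × U => ∫ y, h y ∂(Q p.1 p.2) :=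
    measurable_kernel_integral hQm hQp hh B hB
  have hF : Measurable fun z : (Fin t → X × U) × X =>
      d z.2 (sel z.2) + ∫ y, h y ∂(Q z.2 (sel z.2)) := by
    have hc : Measurable fun z : (Fin t → X × U) × X => ((z.2 : X), sel z.2) :=
      measurable_snd.prodMk (hsel.comp measurable_snd)
    exact (hd2.comp hc).add (hQh.comp hc)
  have hptw : ∀ z : (Fin t → X × U) × X,
      ∫ u, (d z.2 u + ∫ y, h y ∂(Q z.2 u)) ∂(statPolicy sel t z)
        = d z.2 (sel z.2) + ∫ y, h y ∂(Q z.2 (sel z.2)) := by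
    intro z
    show ∫ u, (d z.2 u + ∫ y, h y ∂(Q z.2 u)) ∂(Measure.dirac (sel z.2)) = _
    rw [integral_dirac' (fun u => d z.2 u + ∫ y, h y ∂(Q z.2 u)) (sel z.2) ?_]
    exact ((hd2.comp (measurable_const.prodMk measurable_id)).add
      (hQh.comp (measurable_const.prodMk measurable_id))).stronglyMeasurable
  have heq : ∫ z, ∫ u, (d z.2 u + ∫ y, h y ∂(Q z.2 u)) ∂(statPolicy sel t z)
        ∂(histMeas Q (statPolicy sel) x t)
      = ∫ z, (d z.2 (sel z.2) + ∫ y, h y ∂(Q z.2 (sel z.2)))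
        ∂(histMeas Q (statPolicy sel) x t) :=
    integral_congr_ae (Filter.Eventually.of_forall fun z => hptw z)
  rw [heq]
  have hintz : Integrable (fun z : (Fin t → X × U) × X => h z.2)
      (histMeas Q (statPolicy sel) x t) :=
    integrable_of_bound _ (hh.comp measurable_snd).aestronglyMeasurable B (fun z => hB z.2)
  have h1 : r + ∫ z, h z.2 ∂(histMeas Q (statPolicy sel) x t)
      = ∫ z, (r + h z.2) ∂(histMeas Q (statPolicy sel) x t) := by
    rw [integral_add (integrable_const r) hintz]; simp
  rw [h1]
  refine integral_mono ?_ ((integrable_const r).add hintz) ?_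
  · refine integrable_of_bound _ hF.aestronglyMeasurable (Bd + B) (fun z => ?_)
    haveI := hQp z.2 (sel z.2)
    exact (abs_add_le _ _).trans (add_le_add (hBd _ _) (abs_integral_le _ B hB))
  · exact fun z => hineq z.2

lemma sum_costAt_le_stat {d : X → U → ℝ} (hd : Measurable (Function.uncurry d))
    (Bd : ℝ) (hBd : ∀ x u, |d x u| ≤ Bd) {h : X → ℝ} (hh : Measurable h) (B : ℝ)
    (hB : ∀ y, |h y| ≤ B) (r : ℝ) {sel : X → U} (hsel : Measurable sel)
    (hineq : ∀ x, d x (sel x) + ∫ y, h y ∂(Q x (sel x)) ≤ r + h x) (x : X) :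
    ∀ n : ℕ, (∑ t ∈ Finset.range n, costAt d Q (statPolicy sel) x t)
        + ∫ z, h z.2 ∂(histMeas Q (statPolicy sel) x n) ≤ r * n + h x := by
  have hγ := isAdmissible_statPolicy (X := X) hsel
  intro n
  induction n with
  | zero => simp [integral_snd_histMeas_zero hQm hQp hγ hh x]
  | succ n ih =>
    have hstep := step_le_stat hQm hQp hd Bd hBd hh B hB r hsel hineq x n
    rw [Finset.sum_range_succ]
    push_cast
    linarith

lemma Javg_le_stat [Nonempty U] {d : X → U → ℝ} (hd : Measurable (Function.uncurry d))
    (hd0 : ∀ x u, 0 ≤ d x u)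
    (Bd : ℝ) (hBd : ∀ x u, |d x u| ≤ Bd) {h : X → ℝ} (hh : Measurable h) (B : ℝ)
    (hB : ∀ y, |h y| ≤ B) (r : ℝ) {sel : X → U} (hsel : Measurable sel)
    (hineq : ∀ x, d x (sel x) + ∫ y, h y ∂(Q x (sel x)) ≤ r + h x) (x : X) :
    Javg d Q (statPolicy sel) x ≤ r := by
  have hγ := isAdmissible_statPolicy (X := X) hsel
  have hB0 : 0 ≤ B := le_trans (abs_nonneg _) (hB x)
  set a : ℕ → ℝ := fun n => (∑ t ∈ Finset.range n, costAt d Q (statPolicy sel) x t) / n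
    with ha
  have hSn : ∀ n : ℕ, ∑ t ∈ Finset.range n, costAt d Q (statPolicy sel) x t
      ≤ r * n + 2 * B := by
    intro n
    have h1 := sum_costAt_le_stat hQm hQp hd Bd hBd hh B hB r hsel hineq x n
    haveI := isProbabilityMeasure_histMeas hQm hQp hγ x n
    have h3 : |∫ z, h z.2 ∂(histMeas Q (statPolicy sel) x n)| ≤ B :=
      abs_integral_le _ B (fun z => hB z.2)
    have h2 := abs_le.1 (hB x)
    have h4 := abs_le.1 h3
    linarith
  have hab : ∀ᶠ n : ℕ in atTop, a n ≤ r + 2 * B / n := by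
    filter_upwards [Filter.eventually_ge_atTop 1] with n hn
    have hn0 : (0:ℝ) < n := by positivity
    rw [ha, div_le_iff₀ hn0]
    have : (r + 2 * B / n) * n = r * n + 2 * B := by field_simp
    rw [this]
    exact hSn n
  have htend : Tendsto (fun n : ℕ => r + 2 * B / (n:ℝ)) atTop (𝓝 r) := by
    have h0 : Tendsto (fun n : ℕ => 2 * B / (n:ℝ)) atTop (𝓝 0) :=
      Tendsto.div_atTop tendsto_const_nhds tendsto_natCast_atTop_atTop
    simpa using tendsto_const_nhds.add h0
  have hlimb : Filter.limsup (fun n : ℕ => r + 2 * B / (n:ℝ)) atTop = r :=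
    htend.limsup_eq
  rw [Javg_def, ← ha, ← hlimb]
  refine Filter.limsup_le_limsup hab ?_ ?_
  · refine isCoboundedUnder_le_of_eventually_le atTop (x := 0) ?_
    refine Filter.Eventually.of_forall fun n => ?_
    rw [ha]
    refine div_nonneg (Finset.sum_nonneg fun t _ => costAt_nonneg hQm hQp hγ hd0 x t) ?_
    positivity
  · refine ⟨r + 2 * B, ?_⟩
    rw [Filter.eventually_map]
    filter_upwards [hab, Filter.eventually_ge_atTop 1] with n h6 hn
    have hn0 : (0:ℝ) < n := by positivity
    have hn1 : (1:ℝ) ≤ n := by exact_mod_cast hn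
    have h5 : 2 * B / (n:ℝ) ≤ 2 * B := by
      rw [div_le_iff₀ hn0]; nlinarith
    linarith

end StatCore

section Selector

open Function

variable {X U : Type*} [MeasurableSpace X] [MetricSpace X] [BorelSpace X]
  [SecondCountableTopology X]
  [MeasurableSpace U] [MetricSpace U] [BorelSpace U]
  [SecondCountableTopology U] [CompactSpace U] [Nonempty U]

lemma exists_measurable_selector (f : X → U → ℝ) (hf : Continuous (Function.uncurry f))
    {δ : ℝ} (hδ : 0 < δ) :
    ∃ sel : X → U, Measurable sel ∧ ∀ x, f x (sel x) ≤ (⨅ u, f x u) + δ := by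
  classical
  set D : ℕ → U := TopologicalSpace.denseSeq U with hDdef
  have hD : DenseRange D := TopologicalSpace.denseRange_denseSeq U
  have hfx : ∀ x : X, Continuous (f x) := fun x =>
    hf.comp (Continuous.prodMk_right x)
  have hmin : ∀ x : X, ∃ u0 : U, (⨅ u, f x u) = f x u0 ∧ ∀ u, f x u0 ≤ f x u := by
    intro x
    obtain ⟨u0, -, hu0⟩ := isCompact_univ.exists_isMinOn Set.univ_nonempty
      (hfx x).continuousOn
    have hu0 : ∀ u : U, f x u0 ≤ f x u := fun u => hu0 (Set.mem_univ u)
    have hbdd : BddBelow (Set.range (f x)) :=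
      ⟨f x u0, by rintro r ⟨u, rfl⟩; exact hu0 u⟩
    exact ⟨u0, le_antisymm (ciInf_le hbdd u0) (le_ciInf fun u => hu0 u), fun u => hu0 u⟩
  have hexists : ∀ x : X, ∃ i : ℕ, f x (D i) < (⨅ u, f x u) + δ := by
    intro x
    obtain ⟨u0, hmin1, -⟩ := hmin x
    have hopen : IsOpen {u : U | f x u < (⨅ u, f x u) + δ} :=
      isOpen_lt (hfx x) continuous_const
    have hne : {u : U | f x u < (⨅ u, f x u) + δ}.Nonempty :=
      ⟨u0, by simp only [Set.mem_setOf_eq, hmin1]; linarith⟩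
    obtain ⟨i, hi⟩ := hD.exists_mem_open hopen hne
    exact ⟨i, hi⟩
  have hmi : ∀ i : ℕ, Measurable fun x => f x (D i) := fun i =>
    (hf.comp (continuous_id.prodMk continuous_const)).measurable
  have hinf_eq : ∀ x, (⨅ u, f x u) = ⨅ i, f x (D i) := by
    intro x
    obtain ⟨u0, -, hu0⟩ := hmin x
    have hbdd : BddBelow (Set.range (f x)) :=
      ⟨f x u0, by rintro r ⟨u, rfl⟩; exact hu0 u⟩
    have hbddD : BddBelow (Set.range fun i => f x (D i)) :=
      ⟨f x u0, by rintro r ⟨i, rfl⟩; exact hu0 (D i)⟩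
    refine le_antisymm (le_ciInf fun i => ciInf_le hbdd (D i)) (le_ciInf fun u => ?_)
    -- ⨅ i, f x (D i) ≤ f x u by density
    refine le_of_forall_pos_lt_add fun ε hε => ?_
    have hcont : ContinuousAt (f x) u := (hfx x).continuousAt
    have : ∀ᶠ v in nhds u, f x v < f x u + ε := by
      have := hcont.eventually_lt_const (by linarith : f x u < f x u + ε)
      exact this
    obtain ⟨s, hs_sub, hs_open, hs_mem⟩ := eventually_nhds_iff.1 this
    obtain ⟨i, hi⟩ := hD.exists_mem_open hs_open ⟨u, hs_mem⟩
    exact lt_of_le_of_lt (ciInf_le hbddD i) (hs_sub _ hi)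
  have hminf : Measurable fun x => ⨅ u, f x u := by
    simp only [hinf_eq]
    exact Measurable.iInf hmi
  have hpmeas : ∀ i : ℕ, MeasurableSet {x : X | f x (D i) < (⨅ u, f x u) + δ} :=
    fun i => measurableSet_lt (hmi i) (hminf.add measurable_const)
  refine ⟨fun x => D (Nat.find (hexists x)), ?_, ?_⟩
  · exact Measurable.find (f := fun i (_ : X) => D i) (fun i => measurable_const)
      hpmeas hexists
  · intro x
    exact le_of_lt (Nat.find_spec (hexists x))

end Selector

/-- Theorem `upperboundacoe1`: continuity of optimal average cost
in the model under minorization.  `hstar` is the (unique) fixed point in `C_b(X)` of the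
contraction `𝕋_{c,T} v(x) = inf_u { c(x,u) + ∫ v d(T(·|x,u) − ε ρ) }`, characterized here
by its fixed-point equation.  Sup norms are pointwise; `‖c−ĉ‖_∞`, `d_{h*}(T,S)` and
`d_{W1}(T,S)` (dual form) are represented by arbitrary upper bounds. -/
theorem average_value_continuity_minorization
    {X U : Type*} [MeasurableSpace X] [MetricSpace X] [BorelSpace X]
    [CompleteSpace X] [SecondCountableTopology X]
    [MeasurableSpace U] [MetricSpace U] [BorelSpace U]
    [CompleteSpace U] [SecondCountableTopology U] [CompactSpace U] [Nonempty U]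
    (T S : X → U → Measure X) (c chat : X → U → ℝ)
    (hT : AssumptionB T c) (hS : AssumptionB S chat)
    (ρ τ : Measure X) [IsProbabilityMeasure ρ] [IsProbabilityMeasure τ]
    (ε : ℝ≥0) (hε : 0 < ε)
    (hminT : Minorized T ρ ε) (hminS : Minorized S τ ε)
    (hstar : X → ℝ) (hstar_cont : Continuous hstar)
    (hstar_bdd : ∃ B : ℝ, ∀ x, |hstar x| ≤ B)
    (hstar_fix : ∀ x, hstar x =
      ⨅ u : U, (c x u + ∫ y, hstar y ∂(T x u) - (ε : ℝ) * ∫ y, hstar y ∂ρ)) :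
    (∀ Dc Dh : ℝ,
      (∀ x u, |c x u - chat x u| ≤ Dc) →
      (∀ x u, dFun hstar (T x u) (S x u) ≤ Dh) →
      ∀ x, |JavgOpt c T x - JavgOpt chat S x| ≤ Dc + Dh)
    ∧
    (∀ K : ℝ≥0, LipschitzWith K hstar →
      ∀ Dc DW : ℝ,
      (∀ x u, |c x u - chat x u| ≤ Dc) →
      (∀ f : X → ℝ, LipschitzWith 1 f → ∀ x u, dFun f (T x u) (S x u) ≤ DW) →
      ∀ x, |JavgOpt c T x - JavgOpt chat S x| ≤ Dc + K * DW) := by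
  classical
  obtain ⟨hc0, ⟨Bc, hBc⟩, hccont, hTp, hTm, hTw⟩ := hT
  obtain ⟨hchat0, ⟨Bchat, hBchat⟩, hchatcont, hSp, hSm, hSw⟩ := hS
  obtain ⟨Bh, hBh⟩ := hstar_bdd
  have hhm : Measurable hstar := hstar_cont.measurable
  have hcm : Measurable (Function.uncurry c) := hccont.measurable
  have hchatm : Measurable (Function.uncurry chat) := hchatcont.measurable
  set g : ℝ := (ε : ℝ) * ∫ y, hstar y ∂ρ with hgdef
  have hTint : ∀ x u, |∫ y, hstar y ∂(T x u)| ≤ Bh := fun x u => by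
    haveI := hTp x u; exact abs_integral_le _ Bh hBh
  have hSint : ∀ x u, |∫ y, hstar y ∂(S x u)| ≤ Bh := fun x u => by
    haveI := hSp x u; exact abs_integral_le _ Bh hBh
  have key1 : ∀ x u, g + hstar x ≤ c x u + ∫ y, hstar y ∂(T x u) := by
    intro x u
    have hb : BddBelow (Set.range fun u : U =>
        c x u + ∫ y, hstar y ∂(T x u) - g) := by
      refine ⟨-Bh - g, ?_⟩
      rintro r ⟨u, rfl⟩
      have h1 := (abs_le.1 (hTint x u)).1
      have h2 := hc0 x u
      dsimp only
      linarith
    have h3 : hstar x ≤ c x u + ∫ y, hstar y ∂(T x u) - g :=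
      (hstar_fix x).le.trans (ciInf_le hb u)
    linarith
  set f : X → U → ℝ := fun x u => c x u + ∫ y, hstar y ∂(T x u) with hfdef
  have hfcont : Continuous (Function.uncurry f) := by
    have h2 := hTw hstar hstar_cont ⟨Bh, hBh⟩
    exact hccont.add h2
  have hbf : ∀ x, BddBelow (Set.range (f x)) := by
    intro x
    refine ⟨-Bh, ?_⟩
    rintro r ⟨u, rfl⟩
    have h1 := (abs_le.1 (hTint x u)).1
    have h2 := hc0 x u
    show -Bh ≤ c x u + ∫ y, hstar y ∂(T x u)
    linarith
  have key2 : ∀ x, (⨅ u, f x u) = hstar x + g := by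
    intro x
    refine le_antisymm ?_ (le_ciInf fun u => by have := key1 x u; simp only [hfdef]; linarith)
    have h3 : (⨅ u, f x u) - g ≤ hstar x := by
      rw [hstar_fix x]
      refine le_ciInf fun u => ?_
      have := ciInf_le (hbf x) u
      simp only [hfdef] at this ⊢
      linarith
    linarith
  have main : ∀ Dc Dh : ℝ,
      (∀ x u, |c x u - chat x u| ≤ Dc) →
      (∀ x u, dFun hstar (T x u) (S x u) ≤ Dh) →
      ∀ x, |JavgOpt c T x - JavgOpt chat S x| ≤ Dc + Dh := by
    intro Dc Dh hDc hDh x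
    have hDc0 : 0 ≤ Dc := le_trans (abs_nonneg _) (hDc x (Classical.arbitrary U))
    have hDh0 : 0 ≤ Dh := le_trans (abs_nonneg _) (hDh x (Classical.arbitrary U))
    set ET : Set ℝ := {r | ∃ γ : Policy X U, IsAdmissible γ ∧ r = Javg c T γ x} with hET
    set ES : Set ℝ := {r | ∃ γ : Policy X U, IsAdmissible γ ∧ r = Javg chat S γ x} with hES
    have hTlow : ∀ r' ∈ ET, g ≤ r' := by
      rintro r' ⟨γ, hγ, rfl⟩
      exact Javg_ge hTm hTp hγ hcm Bc hBc hhm Bh hBh g key1 x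
    have keyS : ∀ x u, (g - (Dc + Dh)) + hstar x ≤ chat x u + ∫ y, hstar y ∂(S x u) := by
      intro x u
      have h4 := key1 x u
      have h5 := abs_le.1 (hDc x u)
      have h6' : |∫ y, hstar y ∂(T x u) - ∫ y, hstar y ∂(S x u)| ≤ Dh := hDh x u
      have h6 := abs_le.1 h6'
      linarith
    have hSlow : ∀ r' ∈ ES, g - (Dc + Dh) ≤ r' := by
      rintro r' ⟨γ, hγ, rfl⟩
      exact Javg_ge hSm hSp hγ hchatm Bchat hBchat hhm Bh hBh (g - (Dc + Dh)) keyS x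
    have hwit : IsAdmissible (statPolicy (X := X) (fun _ => Classical.arbitrary U)) :=
      isAdmissible_statPolicy measurable_const
    have hTlb : g ≤ JavgOpt c T x :=
      le_csInf ⟨_, ⟨_, hwit, rfl⟩⟩ hTlow
    have hSlb : g - (Dc + Dh) ≤ JavgOpt chat S x :=
      le_csInf ⟨_, ⟨_, hwit, rfl⟩⟩ hSlow
    have hupT : ∀ δ : ℝ, 0 < δ → JavgOpt c T x ≤ g + δ := by
      intro δ hδ
      obtain ⟨sel, hselm, hsel⟩ := exists_measurable_selector f hfcont hδ
      have hineqT : ∀ x', c x' (sel x') + ∫ y, hstar y ∂(T x' (sel x'))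
          ≤ (g + δ) + hstar x' := by
        intro x'
        have h9 := hsel x'
        rw [key2 x'] at h9
        simp only [hfdef] at h9
        linarith
      have hle := Javg_le_stat hTm hTp hcm hc0 Bc hBc hhm Bh hBh (g + δ) hselm hineqT x
      have hmem : Javg c T (statPolicy sel) x ∈ ET :=
        ⟨statPolicy sel, isAdmissible_statPolicy hselm, rfl⟩
      exact le_trans (csInf_le ⟨g, hTlow⟩ hmem) hle
    have hTub : JavgOpt c T x ≤ g := by
      by_contra hcon
      push_neg at hcon
      have := hupT ((JavgOpt c T x - g) / 2) (by linarith)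
      linarith
    have hupS : ∀ δ : ℝ, 0 < δ → JavgOpt chat S x ≤ (g + (Dc + Dh)) + δ := by
      intro δ hδ
      obtain ⟨sel, hselm, hsel⟩ := exists_measurable_selector f hfcont hδ
      have hineqS : ∀ x', chat x' (sel x') + ∫ y, hstar y ∂(S x' (sel x'))
          ≤ ((g + (Dc + Dh)) + δ) + hstar x' := by
        intro x'
        have h9 := hsel x'
        rw [key2 x'] at h9
        simp only [hfdef] at h9
        have h5 := abs_le.1 (hDc x' (sel x'))
        have h6' : |∫ y, hstar y ∂(T x' (sel x')) - ∫ y, hstar y ∂(S x' (sel x'))| ≤ Dh :=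
          hDh x' (sel x')
        have h6 := abs_le.1 h6'
        linarith
      have hle := Javg_le_stat hSm hSp hchatm hchat0 Bchat hBchat hhm Bh hBh
        ((g + (Dc + Dh)) + δ) hselm hineqS x
      have hmem : Javg chat S (statPolicy sel) x ∈ ES :=
        ⟨statPolicy sel, isAdmissible_statPolicy hselm, rfl⟩
      exact le_trans (csInf_le ⟨g - (Dc + Dh), hSlow⟩ hmem) hle
    have hSub : JavgOpt chat S x ≤ g + (Dc + Dh) := by
      by_contra hcon
      push_neg at hcon
      have := hupS ((JavgOpt chat S x - (g + (Dc + Dh))) / 2) (by linarith)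
      linarith
    rw [abs_le]
    constructor <;> linarith
  refine ⟨main, ?_⟩
  intro K hK Dc DW hDc hDW x
  have hDh' : ∀ x u, dFun hstar (T x u) (S x u) ≤ (K : ℝ) * DW := by
    intro x u
    by_cases hK0 : K = 0
    · subst hK0
      have hconst : ∀ a b : X, hstar a = hstar b := by
        intro a b
        have := hK.dist_le_mul a b
        simpa [dist_le_zero] using this
      have h1 : ∫ y, hstar y ∂(T x u) = hstar x := by
        haveI := hTp x u
        calc ∫ y, hstar y ∂(T x u) = ∫ _y, hstar x ∂(T x u) :=
              integral_congr_ae (Filter.Eventually.of_forall fun y => hconst y x)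
          _ = hstar x := by simp
      have h2 : ∫ y, hstar y ∂(S x u) = hstar x := by
        haveI := hSp x u
        calc ∫ y, hstar y ∂(S x u) = ∫ _y, hstar x ∂(S x u) :=
              integral_congr_ae (Filter.Eventually.of_forall fun y => hconst y x)
          _ = hstar x := by simp
      show |∫ y, hstar y ∂(T x u) - ∫ y, hstar y ∂(S x u)| ≤ _
      rw [h1, h2]
      simp
    · have hKpos : (0 : ℝ) < K := by
        have : (0 : ℝ≥0) < K := pos_iff_ne_zero.2 hK0
        exact_mod_cast this
      set fK : X → ℝ := fun y => hstar y / K with hfK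
      have hfKlip : LipschitzWith 1 fK := by
        rw [lipschitzWith_iff_dist_le_mul]
        intro a b
        have h3 := hK.dist_le_mul a b
        have h4 : dist (fK a) (fK b) = dist (hstar a) (hstar b) / (K : ℝ) := by
          simp only [hfK, Real.dist_eq, ← sub_div, abs_div, abs_of_pos hKpos]
        rw [h4, div_le_iff₀ hKpos]
        simp only [NNReal.coe_one, one_mul]
        linarith [h3]
      have h7 : dFun fK (T x u) (S x u) ≤ DW := hDW fK hfKlip x u
      have h8 : ∀ ν : Measure X, IsProbabilityMeasure ν →
          ∫ y, hstar y ∂ν = (K : ℝ) * ∫ y, fK y ∂ν := by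
        intro ν _
        rw [← integral_const_mul]
        refine integral_congr_ae (Filter.Eventually.of_forall fun y => ?_)
        simp only [hfK]
        field_simp
      show |∫ y, hstar y ∂(T x u) - ∫ y, hstar y ∂(S x u)| ≤ (K : ℝ) * DW
      rw [h8 _ (hTp x u), h8 _ (hSp x u), ← mul_sub, abs_mul, abs_of_pos hKpos]
      exact mul_le_mul_of_nonneg_left h7 (le_of_lt hKpos)
  exact main Dc ((K : ℝ) * DW) hDc hDh' x


end MDPRobust
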